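/- arXiv:1607.06165 — 2 statements merged into one kernel-verified Lean document; each statement's English description precedes it below -/
import Mathlib

section
/- Let (X,d) and (Λ,ρ) be compact metric spaces, ω : Λ × X → X continuous, p a Borel probability measure on Λ, and ℙ = p^ℕ on Ω = Λ^ℕ. Assume ω is ℙ-weakly hyperbolic (ℙ(S) = 1). Then for every Borel probability measure ν on X and every continuous function φ : X → ℝ, the sequence of integrals ∫_X φ d(T_p^n ν) is Cauchy, where T_p is the transfer operator T_p(μ)(B) = ∫_Λ μ(ω_λ^{-1}(B)) dp(λ). Consequently T_p^n(ν) converges in the weak* topology to a Borel probability measure μ on X. -/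
open Metric Set Filter MeasureTheory

def hcomp {Λ X : Type*} (ω : Λ → X → X) (σ : ℕ → Λ) : ℕ → X → X
  | 0 => id
  | n + 1 => hcomp ω σ n ∘ ω (σ n)

def IsBernoulli {Λ : Type*} [MeasurableSpace Λ]
    (p : Measure Λ) (P : Measure (ℕ → Λ)) : Prop :=
  IsProbabilityMeasure P ∧
    ∀ (n : ℕ) (A : ℕ → Set Λ), (∀ i, MeasurableSet (A i)) →
      P {σ | ∀ i < n, σ i ∈ A i} = ∏ i ∈ Finset.range n, p (A i)

def Sset {Λ X : Type*} [MetricSpace X] (ω : Λ → X → X) : Set (ℕ → Λ) :=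
  {σ | Tendsto (fun n => Metric.diam (Set.range (hcomp ω σ n))) atTop (nhds 0)}

/-- The transfer (Markov) operator `T_p`, defined on probability measures by
`T_p(μ)(B) = ∫_Λ μ(ω_λ⁻¹(B)) dp(λ)`, i.e. as the pushforward of `p × μ` under `ω`. -/
noncomputable def transferOp {X Λ : Type*}
    [MetricSpace X] [CompactSpace X] [MeasurableSpace X] [BorelSpace X]
    [MetricSpace Λ] [CompactSpace Λ] [MeasurableSpace Λ] [BorelSpace Λ]
    (ω : Λ → X → X) (hω : Continuous fun q : Λ × X => ω q.1 q.2)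
    (p : Measure Λ) [IsProbabilityMeasure p]
    (μ : ProbabilityMeasure X) : ProbabilityMeasure X :=
  ⟨(p.prod μ.toMeasure).map (fun q : Λ × X => ω q.1 q.2), by
    have : IsProbabilityMeasure (p.prod μ.toMeasure) := by
      have := μ.2; infer_instance
    exact Measure.isProbabilityMeasure_map hω.measurable.aemeasurable⟩

/-! Only the first `n` letters of `σ` enter `hcomp ω σ n`, so by Fubini and the product
structure of `ℙ`, `T_pⁿ ν` is the law of `(σ, x) ↦ ω_{σ₀} ∘ ⋯ ∘ ω_{σₙ₋₁} (x)` under `ℙ ⊗ ν`.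
For `σ ∈ S` the ranges of these maps are nested sets whose diameters tend to `0`, so the
sequence converges for every `x`. Almost sure convergence implies convergence in distribution,
which gives the weak* limit `μ` and, tested against `φ`, the Cauchy property. -/

section Composition

variable {X Λ : Type*}

def hcompFin (ω : Λ → X → X) : (n : ℕ) → (Fin n → Λ) → X → X
  | 0, _ => id
  | n + 1, τ => ω (τ 0) ∘ hcompFin ω n (Fin.tail τ)

lemma hcomp_succ' (ω : Λ → X → X) (σ : ℕ → Λ) (n : ℕ) :
    hcomp ω σ (n + 1) = ω (σ 0) ∘ hcomp ω (fun i => σ (i + 1)) n := by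
  induction n with
  | zero => rfl
  | succ n ih => rw [hcomp, ih]; rfl

lemma hcompFin_restrict (ω : Λ → X → X) (n : ℕ) (σ : ℕ → Λ) :
    hcompFin ω n (fun i => σ i) = hcomp ω σ n := by
  induction n generalizing σ with
  | zero => rfl
  | succ n ih => rw [hcomp_succ', ← ih]; rfl

lemma range_hcomp_antitone (ω : Λ → X → X) (σ : ℕ → Λ) :
    Antitone fun n => range (hcomp ω σ n) :=
  antitone_nat_of_succ_le fun _ => range_comp_subset_range _ _

lemma measurable_hcompFin [MeasurableSpace X] [MeasurableSpace Λ] {ω : Λ → X → X}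
    (hω : Measurable fun q : Λ × X => ω q.1 q.2) (n : ℕ) :
    Measurable fun q : (Fin n → Λ) × X => hcompFin ω n q.1 q.2 := by
  induction n with
  | zero => exact measurable_snd
  | succ n ih =>
    have htail : Measurable fun τ : Fin (n + 1) → Λ => Fin.tail τ :=
      measurable_pi_lambda _ fun i => measurable_pi_apply i.succ
    exact hω.comp ((measurable_pi_apply 0).comp measurable_fst |>.prodMk <|
      ih.comp ((htail.comp measurable_fst).prodMk measurable_snd))

lemma continuous_hcomp [TopologicalSpace X] [TopologicalSpace Λ] {ω : Λ → X → X}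
    (hω : Continuous fun q : Λ × X => ω q.1 q.2) (n : ℕ) :
    Continuous fun q : (ℕ → Λ) × X => hcomp ω q.1 n q.2 := by
  induction n with
  | zero => exact continuous_snd
  | succ n ih =>
    exact ih.comp (continuous_fst.prodMk
      (hω.comp (((continuous_apply n).comp continuous_fst).prodMk continuous_snd)))

end Composition

lemma IsBernoulli.map_restrict_fin {Λ : Type*} [MeasurableSpace Λ] {p : Measure Λ}
    [SigmaFinite p] {P : Measure (ℕ → Λ)} (hP : IsBernoulli p P) (n : ℕ) :
    P.map (fun σ (i : Fin n) => σ i) = Measure.pi fun _ : Fin n => p := by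
  classical
  refine (Measure.pi_eq fun s hs => ?_).symm
  let A : ℕ → Set Λ := fun i => if h : i < n then s ⟨i, h⟩ else univ
  have hA : ∀ i, MeasurableSet (A i) := fun i => by
    by_cases h : i < n <;> simp [A, h, hs]
  have hpre : (fun (σ : ℕ → Λ) (i : Fin n) => σ i) ⁻¹' univ.pi s
      = {σ | ∀ i < n, σ i ∈ A i} := by
    ext σ
    simp only [mem_preimage, mem_univ_pi, mem_ofPred_eq]
    exact ⟨fun h i hi => by simpa [A, hi] using h ⟨i, hi⟩,
      fun h i => by simpa [A] using h i i.2⟩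
  rw [Measure.map_apply (by fun_prop) (.univ_pi hs), hpre, hP.2 n A hA,
    ← Fin.prod_univ_eq_prod_range]
  simp [A]

section Transfer

variable {X Λ : Type*} [MetricSpace X] [CompactSpace X] [MeasurableSpace X] [BorelSpace X]
  [MetricSpace Λ] [CompactSpace Λ] [MeasurableSpace Λ] [BorelSpace Λ]
  {ω : Λ → X → X} (hω : Continuous fun q : Λ × X => ω q.1 q.2)
  (p : Measure Λ) [IsProbabilityMeasure p]

lemma lintegral_transferOp (μ : ProbabilityMeasure X) {f : X → ENNReal} (hf : Measurable f) :
    ∫⁻ y, f y ∂(transferOp ω hω p μ : Measure X) = ∫⁻ l, ∫⁻ x, f (ω l x) ∂μ ∂p := by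
  change ∫⁻ y, f y ∂((p.prod μ).map fun q : Λ × X => ω q.1 q.2) = _
  rw [lintegral_map hf hω.measurable]
  exact lintegral_prod (fun q : Λ × X => f (ω q.1 q.2)) (hf.comp hω.measurable).aemeasurable

lemma lintegral_iterate_transferOp_eq_pi (n : ℕ) (ν : ProbabilityMeasure X) {f : X → ENNReal}
    (hf : Measurable f) :
    ∫⁻ y, f y ∂((transferOp ω hω p)^[n] ν : Measure X)
      = ∫⁻ τ, ∫⁻ x, f (hcompFin ω n τ x) ∂ν ∂(Measure.pi fun _ : Fin n => p) := by
  induction n generalizing f with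
  | zero => simp [hcompFin]
  | succ n ih =>
    have hF : Measurable fun q : (Λ × (Fin n → Λ)) × X =>
        f (ω q.1.1 (hcompFin ω n q.1.2 q.2)) :=
      hf.comp <| hω.measurable.comp <| measurable_fst.fst.prodMk <|
        (measurable_hcompFin hω.measurable n).comp (measurable_fst.snd.prodMk measurable_snd)
    have hmeas : Measurable fun q : Λ × (Fin n → Λ) =>
        ∫⁻ x, f (ω q.1 (hcompFin ω n q.2 x)) ∂ν :=
      hF.lintegral_prod_right'
    rw [Function.iterate_succ_apply', lintegral_transferOp hω p _ hf,
      lintegral_congr fun l =>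
        ih (f := fun y => f (ω l y)) (hf.comp (hω.measurable.comp measurable_prodMk_left)),
      ← lintegral_prod _ hmeas.aemeasurable,
      ← (measurePreserving_piFinSuccAbove (fun _ : Fin (n + 1) => p) 0).lintegral_comp hmeas]
    -- `piFinSuccAbove _ 0` splits `τ` as `(τ 0, Fin.tail τ)`, the recursion of `hcompFin`.
    rfl

lemma iterate_transferOp_eq_map {P : Measure (ℕ → Λ)} (hP : IsBernoulli p P) (n : ℕ)
    (ν : ProbabilityMeasure X) :
    ((transferOp ω hω p)^[n] ν : Measure X)
      = (P.prod (ν : Measure X)).map fun q => hcomp ω q.1 n q.2 := by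
  have := hP.1
  refine Measure.ext_of_lintegral _ fun f hf => ?_
  have hG : Measurable fun τ : Fin n → Λ => ∫⁻ x, f (hcompFin ω n τ x) ∂ν :=
    (hf.comp (measurable_hcompFin hω.measurable n)).lintegral_prod_right'
  have hF : Measurable fun q : (ℕ → Λ) × X => f (hcomp ω q.1 n q.2) :=
    hf.comp (continuous_hcomp hω n).measurable
  rw [lintegral_iterate_transferOp_eq_pi hω p n ν hf,
    lintegral_map hf (continuous_hcomp hω n).measurable, lintegral_prod _ hF.aemeasurable,
    ← hP.map_restrict_fin n, lintegral_map hG (by fun_prop)]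
  simp only [hcompFin_restrict]

end Transfer

lemma measurable_diam_range_hcomp {X Λ : Type*} [MetricSpace X] [TopologicalSpace Λ]
    [MeasurableSpace Λ] [OpensMeasurableSpace (ℕ → Λ)] {ω : Λ → X → X}
    (hω : Continuous fun q : Λ × X => ω q.1 q.2) (n : ℕ) :
    Measurable fun σ : ℕ → Λ => diam (range (hcomp ω σ n)) := by
  have hediam : LowerSemicontinuous fun σ : ℕ → Λ => ediam (range (hcomp ω σ n)) := by
    simp only [ediam, iSup_range]
    refine lowerSemicontinuous_iSup fun x => lowerSemicontinuous_iSup fun y => ?_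
    have hcont : ∀ z : X, Continuous fun σ : ℕ → Λ => hcomp ω σ n z := fun z =>
      (continuous_hcomp hω n).comp (continuous_id.prodMk continuous_const)
    exact ((hcont x).edist (hcont y)).lowerSemicontinuous
  exact hediam.measurable.ennreal_toReal

lemma measurableSet_Sset {X Λ : Type*} [MetricSpace X] [TopologicalSpace Λ]
    [MeasurableSpace Λ] [OpensMeasurableSpace (ℕ → Λ)] {ω : Λ → X → X}
    (hω : Continuous fun q : Λ × X => ω q.1 q.2) : MeasurableSet (Sset ω) :=
  measurableSet_tendsto _ (measurable_diam_range_hcomp hω)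

lemma cauchySeq_hcomp_of_mem_Sset {X Λ : Type*} [MetricSpace X] [BoundedSpace X]
    {ω : Λ → X → X} {σ : ℕ → Λ} (hσ : σ ∈ Sset ω) (x : X) :
    CauchySeq fun n => hcomp ω σ n x :=
  cauchySeq_of_le_tendsto_0 _ (fun _ _ _ hm hn => dist_le_diam_of_mem (.all _)
    (range_hcomp_antitone ω σ hm ⟨x, rfl⟩) (range_hcomp_antitone ω σ hn ⟨x, rfl⟩)) hσ

lemma ae_exists_tendsto_hcomp {X Λ : Type*} [MetricSpace X] [CompactSpace X]
    [MeasurableSpace X] [TopologicalSpace Λ] [MeasurableSpace Λ] [OpensMeasurableSpace (ℕ → Λ)]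
    {ω : Λ → X → X} (hω : Continuous fun q : Λ × X => ω q.1 q.2)
    {P : Measure (ℕ → Λ)} [IsProbabilityMeasure P] (hS : P (Sset ω) = 1)
    (ν : Measure X) [SFinite ν] :
    ∀ᵐ q ∂P.prod ν, ∃ y, Tendsto (fun n => hcomp ω q.1 n q.2) atTop (nhds y) := by
  have hSae : ∀ᵐ σ ∂P, σ ∈ Sset ω :=
    (ae_mem_iff_measure_eq (measurableSet_Sset hω).nullMeasurableSet).2
      (hS.trans measure_univ.symm)
  filter_upwards [Measure.quasiMeasurePreserving_fst.ae hSae] with q hq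
  exact cauchySeq_tendsto_of_complete (cauchySeq_hcomp_of_mem_Sset hq q.2)

theorem stmt6 {X Λ : Type*} [MetricSpace X] [CompactSpace X]
    [MeasurableSpace X] [BorelSpace X]
    [MetricSpace Λ] [CompactSpace Λ] [MeasurableSpace Λ] [BorelSpace Λ]
    (ω : Λ → X → X) (hω : Continuous fun q : Λ × X => ω q.1 q.2)
    (p : Measure Λ) [IsProbabilityMeasure p]
    (P : Measure (ℕ → Λ)) (hP : IsBernoulli p P)
    (hS : P (Sset ω) = 1) (ν : ProbabilityMeasure X) :
    (∀ φ : C(X, ℝ), CauchySeq fun n =>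
        ∫ x, φ x ∂(((transferOp ω hω p)^[n] ν : ProbabilityMeasure X) : Measure X)) ∧
      ∃ μ : ProbabilityMeasure X,
        Tendsto (fun n => (transferOp ω hω p)^[n] ν) atTop (nhds μ) := by
  have : IsProbabilityMeasure P := hP.1
  have hΦ : ∀ n, Measurable fun q : (ℕ → Λ) × X => hcomp ω q.1 n q.2 := fun n =>
    (continuous_hcomp hω n).measurable
  obtain ⟨Z, hZ, hlim⟩ := measurable_limit_of_tendsto_metrizable_ae
    (fun n => (hΦ n).aemeasurable) (ae_exists_tendsto_hcomp hω hS (ν : Measure X))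
  let μ : ProbabilityMeasure X :=
    ⟨(P.prod (ν : Measure X)).map Z, Measure.isProbabilityMeasure_map hZ.aemeasurable⟩
  have hT : Tendsto (fun n => (transferOp ω hω p)^[n] ν) atTop (nhds μ) := by
    have hlaw : (fun n => (transferOp ω hω p)^[n] ν) = fun n =>
        ⟨(P.prod (ν : Measure X)).map _, Measure.isProbabilityMeasure_map (hΦ n).aemeasurable⟩ :=
      funext fun n => Subtype.ext (iterate_transferOp_eq_map hω p hP n ν)
    rw [hlaw]
    exact (tendstoInDistribution_of_ae_tendsto (fun n => (hΦ n).aemeasurable)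
      hZ.aemeasurable hlim).tendsto
  refine ⟨fun φ => ?_, μ, hT⟩
  exact (ProbabilityMeasure.tendsto_iff_forall_integral_tendsto.1 hT
    (BoundedContinuousFunction.mkOfCompact φ)).cauchySeq
end

section
/- Let (X,d) and (Λ,ρ) be compact metric spaces, ω : Λ × X → X continuous. The coding map Γ : S → X, defined on S = {σ ∈ Λ^ℕ : lim_n diam(ω_{σ_1} ∘ ⋯ ∘ ω_{σ_n}(X)) = 0} by Γ(σ) = lim_{n→∞} ω_{σ_1} ∘ ⋯ ∘ ω_{σ_n}(x) (independent of x ∈ X), is continuous, where S carries the subspace topology from the product topology on Λ^ℕ. -/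
open Metric Set Filter

lemma hcomp_cont {Λ X : Type*} [TopologicalSpace Λ] [TopologicalSpace X]
    (ω : Λ → X → X) (hω : Continuous fun q : Λ × X => ω q.1 q.2) (n : ℕ) :
    Continuous fun p : (ℕ → Λ) × X => hcomp ω p.1 n p.2 := by
  induction n with
  | zero => exact continuous_snd
  | succ n ih =>
      have : (fun p : (ℕ → Λ) × X => hcomp ω p.1 (n+1) p.2)
          = fun p : (ℕ → Λ) × X => hcomp ω p.1 n (ω (p.1 n) p.2) := rfl
      rw [this]
      exact ih.comp (continuous_fst.prodMk
        (hω.comp (((continuous_apply n).comp continuous_fst).prodMk continuous_snd)))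

lemma hcomp_range_mono {Λ X : Type*} (ω : Λ → X → X) (σ : ℕ → Λ) {n m : ℕ}
    (h : n ≤ m) : Set.range (hcomp ω σ m) ⊆ Set.range (hcomp ω σ n) := by
  induction m, h using Nat.le_induction with
  | base => exact subset_rfl
  | succ m hm ih =>
      refine subset_trans ?_ ih
      rintro _ ⟨x, rfl⟩
      exact ⟨ω (σ m) x, rfl⟩

lemma hrange_bounded {Λ X : Type*} [MetricSpace X] [CompactSpace X]
    (ω : Λ → X → X) (σ : ℕ → Λ) (n : ℕ) :
    Bornology.IsBounded (Set.range (hcomp ω σ n)) :=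
  (isCompact_univ.isBounded).subset (subset_univ _)

lemma dist_Gamma_le {Λ X : Type*} [MetricSpace X] [CompactSpace X]
    (ω : Λ → X → X) (σ : ℕ → Λ) (Γ : X)
    (hΓ : ∀ x : X, Tendsto (fun n => hcomp ω σ n x) atTop (nhds Γ))
    (n : ℕ) (x : X) :
    dist Γ (hcomp ω σ n x) ≤ Metric.diam (Set.range (hcomp ω σ n)) := by
  have h1 : Tendsto (fun m => dist (hcomp ω σ m x) (hcomp ω σ n x)) atTop
      (nhds (dist Γ (hcomp ω σ n x))) := (hΓ x).dist tendsto_const_nhds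
  refine le_of_tendsto h1 ?_
  filter_upwards [eventually_ge_atTop n] with m hm
  exact Metric.dist_le_diam_of_mem (hrange_bounded ω σ n)
    (hcomp_range_mono ω σ hm ⟨x, rfl⟩) ⟨x, rfl⟩

theorem stmt12 {X Λ : Type*} [MetricSpace X] [CompactSpace X]
    [MetricSpace Λ] [CompactSpace Λ]
    (ω : Λ → X → X) (hω : Continuous fun q : Λ × X => ω q.1 q.2)
    (Γ : (ℕ → Λ) → X)
    (hΓ : ∀ σ ∈ Sset ω, ∀ x : X,
      Tendsto (fun n => hcomp ω σ n x) atTop (nhds (Γ σ))) :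
    ContinuousOn Γ (Sset ω) := by
  rcases isEmpty_or_nonempty X with hX | hX
  · exact fun σ _ => (IsEmpty.false (Γ σ)).elim
  set F : ℕ → (ℕ → Λ) → C(X, X) := fun n σ =>
    ⟨fun x => hcomp ω σ n x, (hcomp_cont ω hω n).comp
      ((continuous_const : Continuous fun _ : X => σ).prodMk continuous_id)⟩ with hF
  have hFc : ∀ n, Continuous (F n) := fun n =>
    ContinuousMap.continuous_of_continuous_uncurry _ (hcomp_cont ω hω n)
  intro σ hσ
  have : Tendsto Γ (nhdsWithin σ (Sset ω)) (nhds (Γ σ)) := by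
    rw [Metric.tendsto_nhds]
    intro ε hε
    obtain ⟨n, hn⟩ : ∃ n, Metric.diam (Set.range (hcomp ω σ n)) < ε / 6 :=
      (hσ.eventually (gt_mem_nhds (show (0:ℝ) < ε / 6 by linarith))).exists
    have hev : ∀ᶠ τ in nhds σ, dist (F n τ) (F n σ) < ε / 6 :=
      Metric.tendsto_nhds.1 ((hFc n).tendsto σ) (ε / 6) (by linarith)
    filter_upwards [nhdsWithin_le_nhds hev, self_mem_nhdsWithin] with τ hτ hτS
    set x0 : X := Classical.arbitrary X
    have hdistapp : ∀ x : X, dist (hcomp ω τ n x) (hcomp ω σ n x) ≤ dist (F n τ) (F n σ) :=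
      fun x => ContinuousMap.dist_apply_le_dist (f := F n τ) (g := F n σ) x
    have hdiamτ : Metric.diam (Set.range (hcomp ω τ n))
        ≤ ε / 6 + Metric.diam (Set.range (hcomp ω σ n)) + ε / 6 := by
      refine Metric.diam_le_of_forall_dist_le
        (by have := Metric.diam_nonneg (s := Set.range (hcomp ω σ n)); linarith) ?_
      rintro _ ⟨x, rfl⟩ _ ⟨y, rfl⟩
      calc dist (hcomp ω τ n x) (hcomp ω τ n y)
          ≤ dist (hcomp ω τ n x) (hcomp ω σ n x)
            + dist (hcomp ω σ n x) (hcomp ω σ n y)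
            + dist (hcomp ω σ n y) (hcomp ω τ n y) := dist_triangle4 _ _ _ _
        _ ≤ ε / 6 + Metric.diam (Set.range (hcomp ω σ n)) + ε / 6 := by
            have h1 := le_of_lt (lt_of_le_of_lt (hdistapp x) hτ)
            have h2 : dist (hcomp ω σ n x) (hcomp ω σ n y)
                ≤ Metric.diam (Set.range (hcomp ω σ n)) :=
              Metric.dist_le_diam_of_mem (hrange_bounded ω σ n) ⟨x, rfl⟩ ⟨y, rfl⟩
            have h3 : dist (hcomp ω σ n y) (hcomp ω τ n y) ≤ ε / 6 := by
              rw [dist_comm]; exact le_of_lt (lt_of_le_of_lt (hdistapp y) hτ)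
            linarith
    have hA : dist (Γ τ) (hcomp ω τ n x0) ≤ Metric.diam (Set.range (hcomp ω τ n)) :=
      dist_Gamma_le ω τ (Γ τ) (hΓ τ hτS) n x0
    have hB : dist (hcomp ω τ n x0) (hcomp ω σ n x0) ≤ ε / 6 :=
      le_of_lt (lt_of_le_of_lt (hdistapp x0) hτ)
    have hC : dist (hcomp ω σ n x0) (Γ σ) ≤ Metric.diam (Set.range (hcomp ω σ n)) := by
      rw [dist_comm]; exact dist_Gamma_le ω σ (Γ σ) (hΓ σ hσ) n x0
    calc dist (Γ τ) (Γ σ)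
        ≤ dist (Γ τ) (hcomp ω τ n x0) + dist (hcomp ω τ n x0) (hcomp ω σ n x0)
          + dist (hcomp ω σ n x0) (Γ σ) := dist_triangle4 _ _ _ _
      _ < ε := by linarith
  exact this
end
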